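/- arXiv:2512.19401 — 2 statements merged into one kernel-verified Lean document; each statement's English description precedes it below -/
import Mathlib

section
/- If A and B are effectively inseparable recursively enumerable subsets of ℕ (i.e. A = W a and B = W b for some codes a, b), and C ⊆ ℕ is recursively enumerable with A ⊆ C and C ∩ B = ∅, then C is Σ⁰₁-complete: C is r.e. and every r.e. predicate q : ℕ → Prop is many-one reducible to membership in C. -/
/-- The `c`-th recursively enumerable subset of `ℕ`. -/
def W (c : Nat.Partrec.Code) : Set ℕ := {x | ((Nat.Partrec.Code.eval c) x).Dom}

/-- `A` and `B` are effectively inseparable. -/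
def EffectivelyInseparable (A B : Set ℕ) : Prop :=
  A ∩ B = ∅ ∧ ∃ h : ℕ →. ℕ, Nat.Partrec h ∧
    ∀ u v : Nat.Partrec.Code, A ⊆ W u → B ⊆ W v → W u ∩ W v = ∅ →
      ∃ y ∈ h (Nat.pair (Encodable.encode u) (Encodable.encode v)), y ∉ W u ∪ W v

/-!
Effective inseparability makes the complement of `C` productive: if `W u` misses `C`, the
inseparating function applied to a code of `C` and a code of `W u ∪ B` produces a point outside
`C ∪ W u`. A set with productive complement is Σ⁰₁-hard (Myhill): by the recursion theorem with a
parameter there are codes `f x` with `W (f x) = {g (f x)}` if `q x` holds and `W (f x) = ∅`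
otherwise, and productivity forces `g (f x) ∈ C` exactly when `q x`.
-/

open Nat.Partrec Nat.Partrec.Code Encodable

theorem REPred.exists_W_eq {p : ℕ → Prop} (hp : REPred p) : ∃ c : Code, W c = {x | p x} := by
  obtain ⟨c, hc⟩ := exists_code.1 (Partrec.nat_iff.1
    (hp.map ((Computable.const 0).comp Computable.fst).to₂))
  exact ⟨c, Set.ext fun x => by simp [W, hc, Part.assert]⟩

theorem exists_computable_code_eval_eq {α : Type*} [Primcodable α] {F : α → ℕ →. ℕ}
    (hF : Partrec₂ F) : ∃ f : α → Code, Computable f ∧ ∀ a, eval (f a) = F a := by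
  have hG : Partrec fun n : ℕ => ((decode (α := α) n.unpair.1 : Part α)).bind
      fun a => F a n.unpair.2 :=
    (Computable.decode.comp (Computable.fst.comp Computable.unpair)).ofOption.bind
      (hF.comp Computable.snd (Computable.snd.comp (Computable.unpair.comp Computable.fst))).to₂
  obtain ⟨k, hk⟩ := exists_code.1 (Partrec.nat_iff.1 hG)
  refine ⟨fun a => curry k (encode a),
    primrec₂_curry.to_comp.comp (Computable.const k) Computable.encode, fun a => ?_⟩
  funext x
  simp [eval_curry, hk]

theorem exists_computable_W_eq_union (b : Code) :
    ∃ v : Code → Code, Computable v ∧ ∀ u, W (v u) = W u ∪ W b := by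
  obtain ⟨k, hk, hdom⟩ := Partrec.merge' (f := fun p : Code × ℕ => eval p.1 p.2)
    (g := fun p => eval b p.2) eval_part (eval_part.comp (Computable.const b) Computable.snd)
  obtain ⟨v, hv, hvk⟩ := exists_computable_code_eval_eq (F := fun u x => k (u, x)) hk
  exact ⟨v, hv, fun u => Set.ext fun x => by simp [W, hvk, hdom]⟩

/-- Kleene's recursion theorem with a parameter. -/
theorem exists_computable_eval_eq_self {F : Code → ℕ → ℕ →. ℕ}
    (hF : Partrec fun p : (Code × ℕ) × ℕ => F p.1.1 p.1.2 p.2) :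
    ∃ f : ℕ → Code, Computable f ∧ ∀ x, eval (f x) = F (f x) x := by
  have hx : Computable fun p : Code × ℕ => p.2.unpair.1 :=
    Computable.fst.comp (Computable.unpair.comp Computable.snd)
  obtain ⟨e, he⟩ := fixed_point₂ (f := fun c n => F (curry c n.unpair.1) n.unpair.1 n.unpair.2)
    (hF.comp ((primrec₂_curry.to_comp.comp Computable.fst hx).pair hx |>.pair
      (Computable.snd.comp (Computable.unpair.comp Computable.snd))))
  refine ⟨curry e, primrec₂_curry.to_comp.comp (Computable.const e) Computable.id,
    fun x => funext fun z => ?_⟩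
  simp [eval_curry, he]

theorem exists_computable_W_eq_setOf_and_mem {q : ℕ → Prop} (hq : REPred q) {g : Code →. ℕ}
    (hg : Partrec g) :
    ∃ f : ℕ → Code, Computable f ∧ ∀ x, W (f x) = {z | q x ∧ z ∈ g (f x)} := by
  have hEq : Computable fun p : (((Code × ℕ) × ℕ) × Unit) × ℕ =>
      (if p.1.1.2 = p.2 then some 0 else none : Option ℕ) :=
    (Primrec.ite (Primrec.eq.comp (Primrec.snd.comp (Primrec.fst.comp Primrec.fst))
      Primrec.snd) (Primrec.const _) (Primrec.const _)).to_comp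
  obtain ⟨f, hf, hfix⟩ := exists_computable_eval_eq_self (F := fun c x z =>
      (Part.assert (q x) fun _ => Part.some ()).bind fun _ => (g c).bind fun y =>
        ((if z = y then some 0 else none : Option ℕ) : Part ℕ))
    ((hq.comp (Computable.snd.comp Computable.fst)).bind
      ((hg.comp (Computable.fst.comp (Computable.fst.comp Computable.fst))).bind
        (hEq.ofOption.to₂ (β := ℕ))).to₂)
  refine ⟨f, hf, fun x => Set.ext fun z => ?_⟩
  simp [W, hfix, Part.dom_iff_mem]

def IsProductive (P : Set ℕ) : Prop :=
  ∃ g : Code →. ℕ, Partrec g ∧ ∀ u, W u ⊆ P → ∃ y ∈ g u, y ∈ P \ W u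

section ProductiveFunction

variable {P : Set ℕ} {g : Code →. ℕ} {p : Prop} {u : Code}

theorem dom_of_W_eq_setOf_and_mem (hg : ∀ u, W u ⊆ P → ∃ y ∈ g u, y ∈ P \ W u)
    (hu : W u = {z | p ∧ z ∈ g u}) : (g u).Dom := by
  by_contra hnd
  have hempty : W u ⊆ P := by
    rw [hu]
    rintro z ⟨-, hz⟩
    exact absurd (Part.dom_iff_mem.2 ⟨z, hz⟩) hnd
  obtain ⟨y, hy, -⟩ := hg u hempty
  exact hnd (Part.dom_iff_mem.2 ⟨y, hy⟩)

theorem notMem_iff_of_W_eq_setOf_and_mem (hg : ∀ u, W u ⊆ P → ∃ y ∈ g u, y ∈ P \ W u)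
    (hu : W u = {z | p ∧ z ∈ g u}) {y : ℕ} (hy : y ∈ g u) : y ∉ P ↔ p := by
  constructor
  · intro hyP
    by_contra hp
    obtain ⟨y', hy', hy'P, -⟩ := hg u (by simp [hu, hp])
    exact hyP (Part.mem_unique hy' hy ▸ hy'P)
  · intro hp hyP
    have hsingleton : W u ⊆ P := by
      rw [hu]
      rintro z ⟨-, hz⟩
      exact Part.mem_unique hz hy ▸ hyP
    obtain ⟨y', hy', -, hy'W⟩ := hg u hsingleton
    exact hy'W (hu ▸ ⟨hp, Part.mem_unique hy' hy ▸ hy⟩)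

end ProductiveFunction

theorem manyOneReducible_of_isProductive_compl {C : Set ℕ} (hC : IsProductive Cᶜ)
    {q : ℕ → Prop} (hq : REPred q) : q ≤₀ (· ∈ C) := by
  obtain ⟨g, hg, hprod⟩ := hC
  obtain ⟨f, hf, hW⟩ := exists_computable_W_eq_setOf_and_mem hq hg
  have hdom x : (g (f x)).Dom := dom_of_W_eq_setOf_and_mem hprod (hW x)
  refine ⟨fun x => (g (f x)).get (hdom x),
    (hg.comp hf).of_eq_tot fun x => Part.get_mem (hdom x), fun x => ?_⟩
  rw [← notMem_iff_of_W_eq_setOf_and_mem hprod (hW x) (Part.get_mem (hdom x)),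
    Set.mem_compl_iff, not_not]

theorem EffectivelyInseparable.isProductive_compl {A C : Set ℕ} {b : Code}
    (hAB : EffectivelyInseparable A (W b)) (hC : REPred (· ∈ C)) (hAC : A ⊆ C)
    (hCB : C ∩ W b = ∅) : IsProductive Cᶜ := by
  obtain ⟨-, h, hh, hsep⟩ := hAB
  obtain ⟨c, hc⟩ := hC.exists_W_eq
  rw [Set.ofPred_mem_eq] at hc
  obtain ⟨v, hv, hvW⟩ := exists_computable_W_eq_union b
  refine ⟨fun u => h (Nat.pair (encode c) (encode (v u))),
    (Partrec.nat_iff.2 hh).comp (Primrec₂.natPair.to_comp.comp (Computable.const _)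
      (Computable.encode.comp hv)), fun u hu => ?_⟩
  have hCu : C ∩ W u = ∅ :=
    Set.disjoint_iff_inter_eq_empty.1 (Set.subset_compl_iff_disjoint_left.1 hu)
  have hdisj : W c ∩ W (v u) = ∅ := by
    rw [hc, hvW, Set.inter_union_distrib_left, hCu, hCB, Set.union_empty]
  obtain ⟨y, hy, hyn⟩ := hsep c (v u) (hc ▸ hAC) (hvW u ▸ Set.subset_union_right) hdisj
  simp only [hc, hvW, Set.mem_union, not_or] at hyn
  exact ⟨y, hy, hyn.1, hyn.2.1⟩

theorem separator_of_effInsep_re_sets_sigma01_complete_general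
    (A B C : Set ℕ) (b : Nat.Partrec.Code) (hB : B = W b)
    (hAB : EffectivelyInseparable A B)
    (hC : REPred (· ∈ C)) (hAC : A ⊆ C) (hCB : C ∩ B = ∅) :
    REPred (· ∈ C) ∧ ∀ q : ℕ → Prop, REPred q → q ≤₀ (· ∈ C) := by
  subst hB
  exact ⟨hC, fun q =>
    manyOneReducible_of_isProductive_compl (hAB.isProductive_compl hC hAC hCB)⟩

/-- Any r.e. separator of an effectively inseparable pair of r.e. sets is Σ⁰₁-complete. -/
theorem separator_of_effInsep_re_sets_sigma01_complete
    (A B C : Set ℕ) (a b : Nat.Partrec.Code) (hA : A = W a) (hB : B = W b)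
    (hAB : EffectivelyInseparable A B)
    (hC : REPred (· ∈ C)) (hAC : A ⊆ C) (hCB : C ∩ B = ∅) :
    REPred (· ∈ C) ∧ ∀ q : ℕ → Prop, REPred q → q ≤₀ (· ∈ C) :=
  separator_of_effInsep_re_sets_sigma01_complete_general A B C b hB hAB hC hAC hCB
end

section
/- Suppose A, B ⊆ ℕ are effectively inseparable, A', B' ⊆ ℕ satisfy A' ∩ B' = ∅, and f : ℕ → ℕ is a total computable function with f '' A ⊆ A' and f '' B ⊆ B'. Then A' and B' are effectively inseparable. -/
/-!
If `cf` computes `f`, then `W (u.comp cf) = f ⁻¹' W u`. So a disjoint pair `W u ⊇ A'`,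
`W v ⊇ B'` pulls back along `f` to a disjoint pair containing `A` and `B`, the witness `y`
for the pulled-back pair lies outside both preimages, and `f y` lies outside `W u ∪ W v`.
The new productive function is `f ∘ h ∘ (u, v ↦ (u.comp cf, v.comp cf))` on indices.
-/
namespace Nat.Partrec.Code

open Encodable Denumerable

theorem W_comp_eq_preimage {f : ℕ → ℕ} {cf : Code} (hcf : eval cf = f)
    (c : Code) : W (c.comp cf) = f ⁻¹' W c := by
  ext x
  simp only [W, eval, hcf, Set.mem_ofPred_eq, Set.mem_preimage, PFun.coe_val]
  exact Iff.of_eq (congrArg Part.Dom (Part.bind_some _ _))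

def compPairIndex (cf : Code) (n : ℕ) : ℕ :=
  Nat.pair (encode ((ofNat Code n.unpair.1).comp cf)) (encode ((ofNat Code n.unpair.2).comp cf))

theorem compPairIndex_pair (cf u v : Code) :
    compPairIndex cf (Nat.pair (encode u) (encode v)) =
      Nat.pair (encode (u.comp cf)) (encode (v.comp cf)) := by
  simp [compPairIndex]

theorem primrec_compPairIndex (cf : Code) : Primrec (compPairIndex cf) := by
  have comp_ofNat {p : ℕ → ℕ} (hp : Primrec p) :
      Primrec fun n => encode ((ofNat Code (p n)).comp cf) :=
    Primrec.encode.comp <| primrec₂_comp.comp ((Primrec.ofNat Code).comp hp) (.const cf)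
  exact Primrec₂.natPair.comp (comp_ofNat (Primrec.fst.comp Primrec.unpair))
    (comp_ofNat (Primrec.snd.comp Primrec.unpair))

end Nat.Partrec.Code

open Nat.Partrec Code Encodable in
/-- Effective inseparability propagates along e.i.-reductions. -/
theorem effInsep_of_ei_reduction
    (A B A' B' : Set ℕ) (hAB : EffectivelyInseparable A B) (hA'B' : A' ∩ B' = ∅)
    (f : ℕ → ℕ) (hf : Computable f) (hfA : f '' A ⊆ A') (hfB : f '' B ⊆ B') :
    EffectivelyInseparable A' B' := by
  obtain ⟨-, h, hh, hsep⟩ := hAB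
  obtain ⟨cf, hcf⟩ := exists_code.1 (Partrec.nat_iff.1 hf)
  have hpart : Partrec fun n => (h (compPairIndex cf n)).map f :=
    ((Partrec.nat_iff.2 hh).comp (primrec_compPairIndex cf).to_comp).map
      (hf.comp Computable.snd).to₂
  refine ⟨hA'B', _, Partrec.nat_iff.1 hpart, fun u v hu hv huv => ?_⟩
  have hA : A ⊆ W (u.comp cf) := by
    rw [W_comp_eq_preimage hcf, ← Set.image_subset_iff]; exact hfA.trans hu
  have hB : B ⊆ W (v.comp cf) := by
    rw [W_comp_eq_preimage hcf, ← Set.image_subset_iff]; exact hfB.trans hv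
  have hdisj : W (u.comp cf) ∩ W (v.comp cf) = ∅ := by
    rw [W_comp_eq_preimage hcf, W_comp_eq_preimage hcf, ← Set.preimage_inter, huv,
      Set.preimage_empty]
  obtain ⟨y, hy, hy_out⟩ := hsep _ _ hA hB hdisj
  rw [W_comp_eq_preimage hcf, W_comp_eq_preimage hcf, ← Set.preimage_union] at hy_out
  exact ⟨f y, by rw [compPairIndex_pair]; exact Part.mem_map f hy, hy_out⟩
end
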